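/- arXiv:math/0609075 — 3 statements merged into one kernel-verified Lean document; each statement's English description precedes it below -/
import Mathlib

section
/- Let Γ be a graph in [l] whose graphic arrangement A(Γ) has rank at least 3, and let p be a prime with p ≠ 3. Then β_p(Γ) = 0; equivalently, every p-cocycle η : A(Γ) → 𝔽_p is constant on A(Γ). -/
open scoped Classical

noncomputable section

/-- A (candidate) hyperplane in `ℂ^l`: a submodule of `Fin l → ℂ`. -/
abbrev Hyp (l : ℕ) := Submodule ℂ (Fin l → ℂ)

/-- `X` is a rank-2 flat of the central arrangement `A`. -/
def IsRank2Flat {l : ℕ} (A : Finset (Hyp l)) (X : Hyp l) : Prop :=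
  ∃ H ∈ A, ∃ K ∈ A, H ≠ K ∧ X = H ⊓ K

/-- The hyperplanes of `A` containing the flat `X` (so `m_X = (flatHyps A X).card`). -/
def flatHyps {l : ℕ} (A : Finset (Hyp l)) (X : Hyp l) : Finset {H // H ∈ A} :=
  A.attach.filter fun L => X ≤ (L : Hyp l)

/-- `η : A → 𝔽_p` is a `p`-cocycle: for every rank-2 flat `X`, the sum of `η` over `A_X`
vanishes when `p ∣ m_X`, and `η` is constant on `A_X` when `p ∤ m_X`. -/
def IsCocycle {l : ℕ} (p : ℕ) (A : Finset (Hyp l)) (η : {H // H ∈ A} → ZMod p) : Prop :=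
  ∀ X : Hyp l, IsRank2Flat A X →
    ((p ∣ (flatHyps A X).card → ∑ L ∈ flatHyps A X, η L = 0) ∧
     (¬ p ∣ (flatHyps A X).card →
       ∀ H ∈ flatHyps A X, ∀ K ∈ flatHyps A X, η H = η K))

/-- The rank of a central arrangement in `ℂ^l`: the codimension of the intersection of
all its hyperplanes. -/
def arrRank {l : ℕ} (A : Finset (Hyp l)) : ℕ :=
  l - Module.finrank ℂ ↥(A.inf id)

/-- A graph `Γ` in `[l]`: loops `E₁(Γ) ⊆ [l]`, and signed edges `ij^ε` (recorded with
`i < j`, the sign `ε` encoded by a `Bool`: `true ↦ +1`, `false ↦ -1`); a pair `{i,j}`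
may carry one signed edge (a simple edge) or both (a double edge). -/
structure SGraph (l : ℕ) where
  loops : Finset (Fin l)
  edges : Finset (Fin l × Fin l × Bool)
  edges_lt : ∀ e ∈ edges, e.1 < e.2.1

/-- The hyperplane `x_i = 0` of a loop at `i`. -/
def loopHyp {l : ℕ} (i : Fin l) : Hyp l :=
  LinearMap.ker (LinearMap.proj i : (Fin l → ℂ) →ₗ[ℂ] ℂ)

/-- The hyperplane `x_i + ε·x_j = 0` of a signed edge `ij^ε`. -/
def edgeHyp {l : ℕ} (i j : Fin l) (b : Bool) : Hyp l :=
  LinearMap.ker ((LinearMap.proj i : (Fin l → ℂ) →ₗ[ℂ] ℂ)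
    + (if b then (1 : ℂ) else -1) • (LinearMap.proj j : (Fin l → ℂ) →ₗ[ℂ] ℂ))

/-- The graphic arrangement `A(Γ)` in `ℂ^l`. -/
def graphArr {l : ℕ} (G : SGraph l) : Finset (Hyp l) :=
  G.loops.image loopHyp ∪ G.edges.image fun e => edgeHyp e.1 e.2.1 e.2.2

/-- The (unordered) signed edge `ij^ε` belongs to `Γ`. -/
def SGraph.hasEdge {l : ℕ} (G : SGraph l) (i j : Fin l) (b : Bool) : Prop :=
  (i, j, b) ∈ G.edges ∨ (j, i, b) ∈ G.edges

section Basic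
variable {l : ℕ}

lemma mem_loopHyp (i : Fin l) (x : Fin l → ℂ) : x ∈ loopHyp i ↔ x i = 0 := by
  simp [loopHyp, LinearMap.mem_ker]

lemma mem_edgeHyp (i j : Fin l) (b : Bool) (x : Fin l → ℂ) :
    x ∈ edgeHyp i j b ↔ x i + (if b then (1:ℂ) else -1) * x j = 0 := by
  cases b <;>
    simp [edgeHyp, LinearMap.mem_ker, smul_eq_mul, sub_eq_add_neg, neg_mul, one_mul]

lemma edgeHyp_comm (i j : Fin l) (b : Bool) : edgeHyp i j b = edgeHyp j i b := by
  ext x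
  rw [mem_edgeHyp, mem_edgeHyp]
  cases b <;> simp only [Bool.false_eq_true, if_false, if_true]
  · constructor <;> intro h <;> linear_combination -h
  · constructor <;> intro h <;> linear_combination h

lemma mem_graphArr (G : SGraph l) (H : Hyp l) :
    H ∈ graphArr G ↔ (∃ i ∈ G.loops, H = loopHyp i) ∨
      (∃ e ∈ G.edges, H = edgeHyp e.1 e.2.1 e.2.2) := by
  simp [graphArr, Finset.mem_union, Finset.mem_image, eq_comm]

end Basic
section Witness
variable {l : ℕ}

/-- sign of a bool -/
def sgn (b : Bool) : ℂ := if b then 1 else -1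

lemma mem_edgeHyp' (i j : Fin l) (b : Bool) (x : Fin l → ℂ) :
    x ∈ edgeHyp i j b ↔ x i + sgn b * x j = 0 := mem_edgeHyp i j b x

lemma sgn_mul_self (b : Bool) : sgn b * sgn b = 1 := by cases b <;> norm_num [sgn]

lemma sgn_ne_zero (b : Bool) : sgn b ≠ 0 := by cases b <;> norm_num [sgn]

lemma sgn_inj {a b : Bool} (h : sgn a = sgn b) : a = b := by
  cases a <;> cases b <;> simp_all [sgn] <;> norm_num at h

/-- vector supported on two coordinates -/
def v2 (a b : Fin l) (x y : ℂ) : Fin l → ℂ := fun m => if m = a then x else if m = b then y else 0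

lemma v2_a {a b : Fin l} (x y : ℂ) : v2 a b x y a = x := by simp [v2]
lemma v2_b {a b : Fin l} (h : b ≠ a) (x y : ℂ) : v2 a b x y b = y := by simp [v2, h]
lemma v2_other {a b m : Fin l} (ha : m ≠ a) (hb : m ≠ b) (x y : ℂ) : v2 a b x y m = 0 := by
  simp [v2, ha, hb]

/-- vector supported on three coordinates -/
def v3 (a b c : Fin l) (x y z : ℂ) : Fin l → ℂ :=
  fun m => if m = a then x else if m = b then y else if m = c then z else 0

lemma v3_a {a b c : Fin l} (x y z : ℂ) : v3 a b c x y z a = x := by simp [v3]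
lemma v3_b {a b c : Fin l} (h : b ≠ a) (x y z : ℂ) : v3 a b c x y z b = y := by simp [v3, h]
lemma v3_c {a b c : Fin l} (h1 : c ≠ a) (h2 : c ≠ b) (x y z : ℂ) : v3 a b c x y z c = z := by
  simp [v3, h1, h2]
lemma v3_other {a b c m : Fin l} (ha : m ≠ a) (hb : m ≠ b) (hc : m ≠ c) (x y z : ℂ) :
    v3 a b c x y z m = 0 := by simp [v3, ha, hb, hc]

/-- the canonical vector in an edge hyperplane -/
lemma v2_mem_edgeHyp {a b : Fin l} (hba : b ≠ a) (u : Bool) :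
    v2 a b 1 (-(sgn u)) ∈ edgeHyp a b u := by
  rw [mem_edgeHyp' a b u, v2_a, v2_b hba]
  cases u <;> norm_num [sgn]

lemma single_mem_edgeHyp {a b m : Fin l} (hma : m ≠ a) (hmb : m ≠ b) (u : Bool) (x : ℂ) :
    Pi.single m x ∈ edgeHyp a b u := by
  rw [mem_edgeHyp' a b u]
  simp [Pi.single_apply, hma.symm, hmb.symm]

lemma loopHyp_ne {i j : Fin l} (hij : i ≠ j) : loopHyp i ≠ loopHyp j := by
  intro h
  have h1 : (Pi.single j (1:ℂ)) ∈ loopHyp i := by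
    rw [mem_loopHyp]; simp [Pi.single_apply, hij]
  rw [h, mem_loopHyp] at h1
  simp at h1

lemma loopHyp_ne_edgeHyp (a : Fin l) {c d : Fin l} (hcd : c ≠ d) (u : Bool) :
    loopHyp a ≠ edgeHyp c d u := by
  intro h
  by_cases hac : a = c
  · subst hac
    have h1 : v2 a d 1 (-(sgn u)) ∈ edgeHyp a d u := v2_mem_edgeHyp (Ne.symm hcd) u
    rw [← h, mem_loopHyp, v2_a] at h1
    simp at h1
  · by_cases had : a = d
    · subst had
      have h1 : v2 c a 1 (-(sgn u)) ∈ edgeHyp c a u := v2_mem_edgeHyp (Ne.symm hcd) u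
      rw [← h, mem_loopHyp, v2_b hac] at h1
      exact sgn_ne_zero u (by linear_combination -h1)
    · have h1 : (Pi.single a (1:ℂ)) ∈ edgeHyp c d u := single_mem_edgeHyp hac had u 1
      rw [← h, mem_loopHyp] at h1
      simp at h1

lemma edgeHyp_sign_ne {i j : Fin l} (hij : i ≠ j) : edgeHyp i j true ≠ edgeHyp i j false := by
  intro h
  have h1 : v2 i j 1 (-(sgn true)) ∈ edgeHyp i j true := v2_mem_edgeHyp (Ne.symm hij) true
  rw [h, mem_edgeHyp' i j false, v2_a, v2_b (Ne.symm hij)] at h1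
  norm_num [sgn] at h1

end Witness
section Classify
variable {l : ℕ}

def coordFlat (i j : Fin l) : Hyp l := loopHyp i ⊓ loopHyp j

lemma mem_coordFlat (i j : Fin l) (x : Fin l → ℂ) :
    x ∈ coordFlat i j ↔ x i = 0 ∧ x j = 0 := by
  simp [coordFlat, Submodule.mem_inf, mem_loopHyp]

def Qset (i j : Fin l) : Finset (Hyp l) :=
  {loopHyp i, loopHyp j, edgeHyp i j true, edgeHyp i j false}

lemma Qset_card (i j : Fin l) : (Qset i j).card ≤ 4 := by
  refine le_trans (Finset.card_insert_le _ _) ?_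
  refine Nat.succ_le_succ (le_trans (Finset.card_insert_le _ _) ?_)
  refine Nat.succ_le_succ (le_trans (Finset.card_insert_le _ _) ?_)
  simp

lemma Qset_comm (i j : Fin l) : Qset i j = Qset j i := by
  simp only [Qset, edgeHyp_comm i j]
  ext x
  simp only [Finset.mem_insert, Finset.mem_singleton]
  tauto

lemma coordFlat_comm (i j : Fin l) : coordFlat i j = coordFlat j i := by
  simp [coordFlat, inf_comm]

lemma coordFlat_le_edgeHyp (i j : Fin l) (b : Bool) : coordFlat i j ≤ edgeHyp i j b := by
  intro x hx
  rw [mem_coordFlat] at hx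
  rw [mem_edgeHyp' i j b, hx.1, hx.2]
  ring

lemma coordFlat_le_of_mem_Qset {i j : Fin l} {L : Hyp l} (h : L ∈ Qset i j) :
    coordFlat i j ≤ L := by
  simp only [Qset, Finset.mem_insert, Finset.mem_singleton] at h
  rcases h with rfl | rfl | rfl | rfl
  · exact inf_le_left
  · exact inf_le_right
  · exact coordFlat_le_edgeHyp i j true
  · exact coordFlat_le_edgeHyp i j false

lemma single_mem_coordFlat {i j m : Fin l} (hi : m ≠ i) (hj : m ≠ j) (x : ℂ) :
    Pi.single m x ∈ coordFlat i j := by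
  rw [mem_coordFlat]
  simp [Pi.single_apply, hi.symm, hj.symm]

/-- classification of hyperplanes containing a coordinate flat -/
lemma classify_P (G : SGraph l) {i j : Fin l} (hij : i ≠ j) :
    ∀ L ∈ graphArr G, coordFlat i j ≤ L → L ∈ Qset i j := by
  intro L hL hle
  rcases (mem_graphArr G L).mp hL with ⟨c, _, rfl⟩ | ⟨e, he, rfl⟩
  · -- loop
    by_cases hci : c = i
    · subst hci; simp [Qset]
    · by_cases hcj : c = j
      · subst hcj; simp [Qset]
      · exfalso
        have h1 := hle (single_mem_coordFlat hci hcj 1)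
        rw [mem_loopHyp] at h1
        simp at h1
  · -- edge
    obtain ⟨c, d, u⟩ := e
    have hcd : c ≠ d := Fin.ne_of_lt (G.edges_lt _ he)
    simp only at hle ⊢
    have hc : c = i ∨ c = j := by
      by_contra hcon
      push_neg at hcon
      have h1 := hle (single_mem_coordFlat hcon.1 hcon.2 1)
      rw [mem_edgeHyp'] at h1
      rw [Pi.single_eq_same, Pi.single_eq_of_ne (Ne.symm hcd)] at h1
      simp at h1
    have hd : d = i ∨ d = j := by
      by_contra hcon
      push_neg at hcon
      have h1 := hle (single_mem_coordFlat hcon.1 hcon.2 1)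
      rw [mem_edgeHyp'] at h1
      rw [Pi.single_eq_same, Pi.single_eq_of_ne hcd] at h1
      have := sgn_ne_zero u
      simp at h1
      tauto
    rcases hc with rfl | rfl
    · rcases hd with rfl | rfl
      · exact absurd rfl hcd
      · cases u <;> simp [Qset]
    · rcases hd with rfl | rfl
      · rw [edgeHyp_comm]; cases u <;> simp [Qset]
      · exact absurd rfl hcd
end Classify
section ClassifyM
variable {l : ℕ}

lemma mem_mixFlat {a c d : Fin l} (u : Bool) (x : Fin l → ℂ) :
    x ∈ loopHyp a ⊓ edgeHyp c d u ↔ x a = 0 ∧ x c + sgn u * x d = 0 := by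
  simp [Submodule.mem_inf, mem_loopHyp, mem_edgeHyp']

lemma classify_M (G : SGraph l) {a c d : Fin l} (hcd : c ≠ d) (hac : a ≠ c) (had : a ≠ d)
    (u : Bool) :
    ∀ L ∈ graphArr G, loopHyp a ⊓ edgeHyp c d u ≤ L →
      L = loopHyp a ∨ L = edgeHyp c d u := by
  intro L hL hle
  have hwc : (v2 c d 1 (-(sgn u))) c = 1 := v2_a _ _
  have hwd : (v2 c d 1 (-(sgn u))) d = -(sgn u) := v2_b hcd.symm _ _
  have hwa : (v2 c d 1 (-(sgn u))) a = 0 := v2_other hac had _ _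
  have hwX : (v2 c d 1 (-(sgn u))) ∈ loopHyp a ⊓ edgeHyp c d u := by
    rw [mem_mixFlat, hwa, hwc, hwd]
    have := sgn_mul_self u
    constructor
    · rfl
    · linear_combination -this
  rcases (mem_graphArr G L).mp hL with ⟨e, _, rfl⟩ | ⟨ed, hed, rfl⟩
  · -- L is a loop
    left
    by_cases hea : e = a
    · rw [hea]
    · exfalso
      by_cases hec : e = c
      · subst hec
        have h1 := hle hwX; rw [mem_loopHyp, hwc] at h1; simp at h1
      · by_cases hed' : e = d
        · subst hed'
          have h1 := hle hwX; rw [mem_loopHyp, hwd] at h1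
          exact sgn_ne_zero u (by linear_combination -h1)
        · have h1 : Pi.single e (1:ℂ) ∈ loopHyp a ⊓ edgeHyp c d u := by
            rw [mem_mixFlat]
            refine ⟨Pi.single_eq_of_ne (Ne.symm hea) _, ?_⟩
            rw [Pi.single_eq_of_ne (Ne.symm hec), Pi.single_eq_of_ne (Ne.symm hed')]
            ring
          have h2 := hle h1; rw [mem_loopHyp, Pi.single_eq_same] at h2; simp at h2
  · -- L is an edge
    obtain ⟨e, f, u'⟩ := ed
    have hef : e ≠ f := Fin.ne_of_lt (G.edges_lt _ hed)
    simp only at hle ⊢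
    have hsingle : ∀ m : Fin l, m ≠ a → m ≠ c → m ≠ d →
        Pi.single m (1:ℂ) ∈ loopHyp a ⊓ edgeHyp c d u := by
      intro m h1 h2 h3
      rw [mem_mixFlat]
      refine ⟨Pi.single_eq_of_ne (Ne.symm h1) _, ?_⟩
      rw [Pi.single_eq_of_ne (Ne.symm h2), Pi.single_eq_of_ne (Ne.symm h3)]
      ring
    have he3 : e = a ∨ e = c ∨ e = d := by
      by_contra hcon
      push_neg at hcon
      have h2 := hle (hsingle e hcon.1 hcon.2.1 hcon.2.2)
      rw [mem_edgeHyp', Pi.single_eq_same, Pi.single_eq_of_ne (Ne.symm hef)] at h2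
      simp at h2
    have hf3 : f = a ∨ f = c ∨ f = d := by
      by_contra hcon
      push_neg at hcon
      have h2 := hle (hsingle f hcon.1 hcon.2.1 hcon.2.2)
      rw [mem_edgeHyp', Pi.single_eq_same, Pi.single_eq_of_ne hef] at h2
      exact sgn_ne_zero u' (by linear_combination h2)
    have hw := hle hwX
    rw [mem_edgeHyp'] at hw
    have hena : e ≠ a := by
      intro h; subst h
      rw [hwa] at hw
      rcases hf3 with rfl | rfl | rfl
      · exact hef rfl
      · rw [hwc] at hw; exact sgn_ne_zero u' (by linear_combination hw)
      · rw [hwd] at hw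
        have h1 := sgn_mul_self u
        have h2 := sgn_ne_zero u'
        have h3 := sgn_ne_zero u
        apply h2
        have : sgn u' * sgn u = 0 := by linear_combination -hw
        rcases mul_eq_zero.mp this with h | h
        · exact h
        · exact absurd h h3
    have hfna : f ≠ a := by
      intro h; subst h
      rw [hwa, mul_zero, add_zero] at hw
      rcases he3 with rfl | rfl | rfl
      · exact hef rfl
      · rw [hwc] at hw; simp at hw
      · rw [hwd] at hw; exact sgn_ne_zero u (by linear_combination -hw)
    rcases he3 with rfl | rfl | rfl
    · exact absurd rfl hena
    · -- e = c
      rcases hf3 with rfl | rfl | rfl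
      · exact absurd rfl hfna
      · exact absurd rfl hef
      · -- f = d : L = edgeHyp c d u', show u' = u
        right
        rw [hwc, hwd] at hw
        have huu : u' = u := by
          apply sgn_inj
          have h1 := sgn_mul_self u
          linear_combination (-sgn u) * hw + (-sgn u') * h1
        rw [huu]
    · -- e = d
      rcases hf3 with rfl | rfl | rfl
      · exact absurd rfl hfna
      · -- f = c : L = edgeHyp d c u'
        right
        rw [hwc, hwd] at hw
        have huu : u' = u := by
          apply sgn_inj
          linear_combination hw
        rw [huu, edgeHyp_comm]
      · exact absurd rfl hef
end ClassifyM
section ClassifyT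
variable {l : ℕ}

lemma sgn_xor (s t : Bool) : sgn (xor s t) = -(sgn s * sgn t) := by
  cases s <;> cases t <;> norm_num [sgn]

lemma mem_triFlat {i j k : Fin l} (s t : Bool) (x : Fin l → ℂ) :
    x ∈ edgeHyp i j s ⊓ edgeHyp i k t ↔
      x i + sgn s * x j = 0 ∧ x i + sgn t * x k = 0 := by
  simp [Submodule.mem_inf, mem_edgeHyp']

lemma classify_T (G : SGraph l) {i j k : Fin l} (hij : i ≠ j) (hik : i ≠ k) (hjk : j ≠ k)
    (s t : Bool) :
    ∀ L ∈ graphArr G, edgeHyp i j s ⊓ edgeHyp i k t ≤ L →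
      L = edgeHyp i j s ∨ L = edgeHyp i k t ∨ L = edgeHyp j k (xor s t) := by
  intro L hL hle
  have hwi : (v3 i j k 1 (-(sgn s)) (-(sgn t))) i = 1 := v3_a _ _ _
  have hwj : (v3 i j k 1 (-(sgn s)) (-(sgn t))) j = -(sgn s) := v3_b hij.symm _ _ _
  have hwk : (v3 i j k 1 (-(sgn s)) (-(sgn t))) k = -(sgn t) := v3_c hik.symm hjk.symm _ _ _
  have hwX : (v3 i j k 1 (-(sgn s)) (-(sgn t))) ∈ edgeHyp i j s ⊓ edgeHyp i k t := by
    rw [mem_triFlat, hwi, hwj, hwk]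
    have h1 := sgn_mul_self s
    have h2 := sgn_mul_self t
    constructor
    · linear_combination -h1
    · linear_combination -h2
  have hsingle : ∀ m : Fin l, m ≠ i → m ≠ j → m ≠ k →
      Pi.single m (1:ℂ) ∈ edgeHyp i j s ⊓ edgeHyp i k t := by
    intro m h1 h2 h3
    rw [mem_triFlat]
    rw [Pi.single_eq_of_ne (Ne.symm h1), Pi.single_eq_of_ne (Ne.symm h2),
      Pi.single_eq_of_ne (Ne.symm h3)]
    constructor <;> ring
  rcases (mem_graphArr G L).mp hL with ⟨e, _, rfl⟩ | ⟨ed, hed, rfl⟩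
  · -- L is a loop: impossible
    exfalso
    by_cases hei : e = i
    · subst hei; have h1 := hle hwX; rw [mem_loopHyp, hwi] at h1; simp at h1
    · by_cases hej : e = j
      · subst hej; have h1 := hle hwX; rw [mem_loopHyp, hwj] at h1
        exact sgn_ne_zero s (by linear_combination -h1)
      · by_cases hek : e = k
        · subst hek; have h1 := hle hwX; rw [mem_loopHyp, hwk] at h1
          exact sgn_ne_zero t (by linear_combination -h1)
        · have h2 := hle (hsingle e hei hej hek)
          rw [mem_loopHyp, Pi.single_eq_same] at h2; simp at h2
  · -- L is an edge
    obtain ⟨e, f, u⟩ := ed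
    have hef : e ≠ f := Fin.ne_of_lt (G.edges_lt _ hed)
    simp only at hle ⊢
    have he3 : e = i ∨ e = j ∨ e = k := by
      by_contra hcon
      push_neg at hcon
      have h2 := hle (hsingle e hcon.1 hcon.2.1 hcon.2.2)
      rw [mem_edgeHyp', Pi.single_eq_same, Pi.single_eq_of_ne (Ne.symm hef)] at h2
      simp at h2
    have hf3 : f = i ∨ f = j ∨ f = k := by
      by_contra hcon
      push_neg at hcon
      have h2 := hle (hsingle f hcon.1 hcon.2.1 hcon.2.2)
      rw [mem_edgeHyp', Pi.single_eq_same, Pi.single_eq_of_ne hef] at h2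
      exact sgn_ne_zero u (by linear_combination h2)
    have hw := hle hwX
    rw [mem_edgeHyp'] at hw
    have hs := sgn_mul_self s
    have ht := sgn_mul_self t
    rcases he3 with rfl | rfl | rfl
    · rcases hf3 with rfl | rfl | rfl
      · exact absurd rfl hef
      · -- (i,j)
        left
        rw [hwi, hwj] at hw
        have huu : u = s := by
          apply sgn_inj
          linear_combination (-sgn s) * hw + (-sgn u) * hs
        rw [huu]
      · -- (i,k)
        right; left
        rw [hwi, hwk] at hw
        have huu : u = t := by
          apply sgn_inj
          linear_combination (-sgn t) * hw + (-sgn u) * ht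
        rw [huu]
    · rcases hf3 with rfl | rfl | rfl
      · -- (j,i)
        left
        rw [hwi, hwj] at hw
        have huu : u = s := by
          apply sgn_inj
          linear_combination hw
        rw [huu, edgeHyp_comm]
      · exact absurd rfl hef
      · -- (j,k)
        right; right
        rw [hwj, hwk] at hw
        have huu : u = xor s t := by
          apply sgn_inj
          rw [sgn_xor]
          linear_combination (-sgn t) * hw + (-sgn u) * ht
        rw [huu]
    · rcases hf3 with rfl | rfl | rfl
      · -- (k,i)
        right; left
        rw [hwi, hwk] at hw
        have huu : u = t := by
          apply sgn_inj
          linear_combination hw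
        rw [huu, edgeHyp_comm]
      · -- (k,j)
        right; right
        rw [hwj, hwk] at hw
        have huu : u = xor s t := by
          apply sgn_inj
          rw [sgn_xor]
          linear_combination (-sgn s) * hw + (-sgn u) * hs
        rw [huu, edgeHyp_comm]
      · exact absurd rfl hef

lemma classify_D (G : SGraph l) {a b c d : Fin l} (hab : a ≠ b) (hcd : c ≠ d)
    (hac : a ≠ c) (had : a ≠ d) (hbc : b ≠ c) (hbd : b ≠ d) (s t : Bool) :
    ∀ L ∈ graphArr G, edgeHyp a b s ⊓ edgeHyp c d t ≤ L →
      L = edgeHyp a b s ∨ L = edgeHyp c d t := by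
  intro L hL hle
  have hmem : ∀ x : Fin l → ℂ, x ∈ edgeHyp a b s ⊓ edgeHyp c d t ↔
      (x a + sgn s * x b = 0 ∧ x c + sgn t * x d = 0) := by
    intro x; simp [Submodule.mem_inf, mem_edgeHyp']
  have hw1a : (v2 a b 1 (-(sgn s))) a = 1 := v2_a _ _
  have hw1b : (v2 a b 1 (-(sgn s))) b = -(sgn s) := v2_b hab.symm _ _
  have hw1X : (v2 a b 1 (-(sgn s))) ∈ edgeHyp a b s ⊓ edgeHyp c d t := by
    rw [hmem, hw1a, hw1b, v2_other hac.symm hbc.symm, v2_other had.symm hbd.symm]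
    have h1 := sgn_mul_self s
    constructor
    · linear_combination -h1
    · ring
  have hw2c : (v2 c d 1 (-(sgn t))) c = 1 := v2_a _ _
  have hw2d : (v2 c d 1 (-(sgn t))) d = -(sgn t) := v2_b hcd.symm _ _
  have hw2X : (v2 c d 1 (-(sgn t))) ∈ edgeHyp a b s ⊓ edgeHyp c d t := by
    rw [hmem, hw2c, hw2d, v2_other hac had, v2_other hbc hbd]
    have h1 := sgn_mul_self t
    constructor
    · ring
    · linear_combination -h1
  have hsingle : ∀ m : Fin l, m ≠ a → m ≠ b → m ≠ c → m ≠ d →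
      Pi.single m (1:ℂ) ∈ edgeHyp a b s ⊓ edgeHyp c d t := by
    intro m h1 h2 h3 h4
    rw [hmem]
    rw [Pi.single_eq_of_ne (Ne.symm h1), Pi.single_eq_of_ne (Ne.symm h2),
      Pi.single_eq_of_ne (Ne.symm h3), Pi.single_eq_of_ne (Ne.symm h4)]
    constructor <;> ring
  rcases (mem_graphArr G L).mp hL with ⟨e, _, rfl⟩ | ⟨ed, hed, rfl⟩
  · -- L is a loop: impossible
    exfalso
    by_cases hea : e = a
    · subst hea; have h1 := hle hw1X; rw [mem_loopHyp, hw1a] at h1; simp at h1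
    · by_cases heb : e = b
      · subst heb; have h1 := hle hw1X; rw [mem_loopHyp, hw1b] at h1
        exact sgn_ne_zero s (by linear_combination -h1)
      · by_cases hec : e = c
        · subst hec; have h1 := hle hw2X; rw [mem_loopHyp, hw2c] at h1; simp at h1
        · by_cases hed' : e = d
          · subst hed'; have h1 := hle hw2X; rw [mem_loopHyp, hw2d] at h1
            exact sgn_ne_zero t (by linear_combination -h1)
          · have h2 := hle (hsingle e hea heb hec hed')
            rw [mem_loopHyp, Pi.single_eq_same] at h2; simp at h2
  · -- L is an edge
    obtain ⟨e, f, u⟩ := ed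
    have hef : e ≠ f := Fin.ne_of_lt (G.edges_lt _ hed)
    simp only at hle ⊢
    have he4 : e = a ∨ e = b ∨ e = c ∨ e = d := by
      by_contra hcon
      push_neg at hcon
      have h2 := hle (hsingle e hcon.1 hcon.2.1 hcon.2.2.1 hcon.2.2.2)
      rw [mem_edgeHyp', Pi.single_eq_same, Pi.single_eq_of_ne (Ne.symm hef)] at h2
      simp at h2
    have hf4 : f = a ∨ f = b ∨ f = c ∨ f = d := by
      by_contra hcon
      push_neg at hcon
      have h2 := hle (hsingle f hcon.1 hcon.2.1 hcon.2.2.1 hcon.2.2.2)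
      rw [mem_edgeHyp', Pi.single_eq_same, Pi.single_eq_of_ne hef] at h2
      exact sgn_ne_zero u (by linear_combination h2)
    have hw1 := hle hw1X
    have hw2 := hle hw2X
    rw [mem_edgeHyp'] at hw1 hw2
    have hs := sgn_mul_self s
    have ht := sgn_mul_self t
    have h1c : (v2 a b 1 (-(sgn s))) c = 0 := v2_other hac.symm hbc.symm _ _
    have h1d : (v2 a b 1 (-(sgn s))) d = 0 := v2_other had.symm hbd.symm _ _
    have h2a : (v2 c d 1 (-(sgn t))) a = 0 := v2_other hac had _ _
    have h2b : (v2 c d 1 (-(sgn t))) b = 0 := v2_other hbc hbd _ _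
    rcases he4 with rfl | rfl | rfl | rfl
    · rcases hf4 with rfl | rfl | rfl | rfl
      · exact absurd rfl hef
      · -- (a,b)
        left
        rw [hw1a, hw1b] at hw1
        have huu : u = s := by
          apply sgn_inj
          linear_combination (-sgn s) * hw1 + (-sgn u) * hs
        rw [huu]
      · exfalso; rw [hw1a, h1c, mul_zero, add_zero] at hw1; simp at hw1
      · exfalso; rw [hw1a, h1d, mul_zero, add_zero] at hw1; simp at hw1
    · rcases hf4 with rfl | rfl | rfl | rfl
      · -- (b,a)
        left
        rw [hw1a, hw1b] at hw1
        have huu : u = s := by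
          apply sgn_inj
          linear_combination hw1
        rw [huu, edgeHyp_comm]
      · exact absurd rfl hef
      · exfalso; rw [hw1b, h1c, mul_zero, add_zero] at hw1
        exact sgn_ne_zero s (by linear_combination -hw1)
      · exfalso; rw [hw1b, h1d, mul_zero, add_zero] at hw1
        exact sgn_ne_zero s (by linear_combination -hw1)
    · rcases hf4 with rfl | rfl | rfl | rfl
      · exfalso; rw [hw2c, h2a, mul_zero, add_zero] at hw2; simp at hw2
      · exfalso; rw [hw2c, h2b, mul_zero, add_zero] at hw2; simp at hw2
      · exact absurd rfl hef
      · -- (c,d)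
        right
        rw [hw2c, hw2d] at hw2
        have huu : u = t := by
          apply sgn_inj
          linear_combination (-sgn t) * hw2 + (-sgn u) * ht
        rw [huu]
    · rcases hf4 with rfl | rfl | rfl | rfl
      · exfalso; rw [hw2d, h2a, mul_zero, add_zero] at hw2
        exact sgn_ne_zero t (by linear_combination -hw2)
      · exfalso; rw [hw2d, h2b, mul_zero, add_zero] at hw2
        exact sgn_ne_zero t (by linear_combination -hw2)
      · -- (d,c)
        right
        rw [hw2c, hw2d] at hw2
        have huu : u = t := by
          apply sgn_inj
          linear_combination hw2
        rw [huu, edgeHyp_comm]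
      · exact absurd rfl hef
end ClassifyT
section Cocycle
variable {l : ℕ} {G : SGraph l}

lemma mem_flatHyps_iff {A : Finset (Hyp l)} {X : Hyp l} {L : {H // H ∈ A}} :
    L ∈ flatHyps A X ↔ X ≤ (L : Hyp l) := by
  simp [flatHyps, Finset.mem_filter, Finset.mem_attach]

lemma eq_of_small {p : ℕ} (hp : p.Prime) (hp3 : p ≠ 3)
    (η : {H // H ∈ graphArr G} → ZMod p) (hη : IsCocycle p (graphArr G) η)
    (H K : {H // H ∈ graphArr G}) (hne : (H : Hyp l) ≠ (K : Hyp l))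
    (S : Finset (Hyp l)) (hcard : S.card ≤ 3)
    (hcover : ∀ L ∈ graphArr G, (H : Hyp l) ⊓ (K : Hyp l) ≤ L → L ∈ S) :
    η H = η K := by
  have hflat : IsRank2Flat (graphArr G) ((H : Hyp l) ⊓ (K : Hyp l)) :=
    ⟨H, H.2, K, K.2, hne, rfl⟩
  have hHF : H ∈ flatHyps (graphArr G) ((H : Hyp l) ⊓ (K : Hyp l)) :=
    mem_flatHyps_iff.mpr inf_le_left
  have hKF : K ∈ flatHyps (graphArr G) ((H : Hyp l) ⊓ (K : Hyp l)) :=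
    mem_flatHyps_iff.mpr inf_le_right
  have hne' : H ≠ K := fun h => hne (congrArg _ h)
  have hlow : 2 ≤ (flatHyps (graphArr G) ((H : Hyp l) ⊓ (K : Hyp l))).card :=
    Finset.one_lt_card.mpr ⟨H, hHF, K, hKF, hne'⟩
  have hup : (flatHyps (graphArr G) ((H : Hyp l) ⊓ (K : Hyp l))).card ≤ 3 := by
    refine le_trans (Finset.card_le_card_of_injOn (fun L => (L : Hyp l)) ?_ ?_) hcard
    · intro L hL; exact hcover L L.2 (mem_flatHyps_iff.mp hL)
    · intro x _ y _ hxy; exact Subtype.ext hxy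
  by_cases hdvd : p ∣ (flatHyps (graphArr G) ((H : Hyp l) ⊓ (K : Hyp l))).card
  · have hc23 : (flatHyps (graphArr G) ((H : Hyp l) ⊓ (K : Hyp l))).card = 2 ∨
        (flatHyps (graphArr G) ((H : Hyp l) ⊓ (K : Hyp l))).card = 3 := by omega
    rcases hc23 with hc | hc
    · have hp2 : p = 2 := by
        have := hc ▸ hdvd
        exact (Nat.prime_dvd_prime_iff_eq hp Nat.prime_two).mp this
      have hsub : ({H, K} : Finset _) ⊆ flatHyps (graphArr G) ((H : Hyp l) ⊓ (K : Hyp l)) := by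
        intro x hx
        rcases Finset.mem_insert.mp hx with rfl | hx
        · exact hHF
        · rw [Finset.mem_singleton] at hx; subst hx; exact hKF
      have hcard2 : ({H, K} : Finset _).card = 2 := Finset.card_pair hne'
      have heq : ({H, K} : Finset _) = flatHyps (graphArr G) ((H : Hyp l) ⊓ (K : Hyp l)) :=
        Finset.eq_of_subset_of_card_le hsub (by omega)
      have hsum := (hη _ hflat).1 hdvd
      rw [← heq, Finset.sum_pair hne'] at hsum
      subst hp2
      revert hsum
      revert hη
      generalize η H = x
      generalize η K = y
      intro _ h
      revert h
      revert x y
      decide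
    · exfalso
      apply hp3
      have := hc ▸ hdvd
      exact (Nat.prime_dvd_prime_iff_eq hp Nat.prime_three).mp this
  · exact (hη _ hflat).2 hdvd H hHF K hKF

lemma exists_not_le (hrk : 3 ≤ arrRank (graphArr G)) (i j : Fin l) :
    ∃ L ∈ graphArr G, ¬ (coordFlat i j ≤ L) := by
  by_contra hcon
  push_neg at hcon
  have hle : coordFlat i j ≤ (graphArr G).inf id := Finset.le_inf fun L hL => hcon L hL
  have hker : LinearMap.ker ((LinearMap.proj i : (Fin l → ℂ) →ₗ[ℂ] ℂ).prod
      (LinearMap.proj j)) = coordFlat i j := by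
    ext x
    simp [LinearMap.mem_ker, mem_coordFlat, Prod.ext_iff, LinearMap.prod_apply, Prod.mk_eq_zero]
  have h1 := LinearMap.finrank_range_add_finrank_ker
    ((LinearMap.proj i : (Fin l → ℂ) →ₗ[ℂ] ℂ).prod (LinearMap.proj j))
  rw [hker, Module.finrank_fintype_fun_eq_card, Fintype.card_fin] at h1
  have h2 : Module.finrank ℂ (LinearMap.range ((LinearMap.proj i : (Fin l → ℂ) →ₗ[ℂ] ℂ).prod
      (LinearMap.proj j))) ≤ 2 := by
    have h3 := Submodule.finrank_le (LinearMap.range ((LinearMap.proj i :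
      (Fin l → ℂ) →ₗ[ℂ] ℂ).prod (LinearMap.proj j)))
    simpa using h3
  have h4 : Module.finrank ℂ ↥(coordFlat i j) ≤ Module.finrank ℂ ↥((graphArr G).inf id) :=
    Submodule.finrank_mono hle
  unfold arrRank at hrk
  omega

end Cocycle
section Quad
variable {l : ℕ} {G : SGraph l}

lemma card_pair_le (a b : Hyp l) : ({a, b} : Finset (Hyp l)).card ≤ 3 := by
  refine le_trans (Finset.card_insert_le _ _) ?_
  simp

lemma card_triple_le (a b c : Hyp l) : ({a, b, c} : Finset (Hyp l)).card ≤ 3 := by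
  refine le_trans (Finset.card_insert_le _ _) ?_
  refine Nat.succ_le_succ (le_trans (Finset.card_insert_le _ _) ?_)
  simp

/-- The key p=2 subroutine: a full quadruple on `{i,j}` together with an edge `ik^u` in the
arrangement forces `η` to be constant on the quadruple. -/
lemma shared_case (η : {H // H ∈ graphArr G} → ZMod 2) (hη : IsCocycle 2 (graphArr G) η)
    (i j k : Fin l) (hij : i ≠ j) (hik : i ≠ k) (hjk : j ≠ k)
    (hQ : ∀ M ∈ Qset i j, M ∈ graphArr G) (u : Bool)
    (hLA : edgeHyp i k u ∈ graphArr G) :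
    ∃ c, ∀ (M : Hyp l) (hM : M ∈ graphArr G), M ∈ Qset i j → η ⟨M, hM⟩ = c := by
  have hq1 : loopHyp i ∈ graphArr G := hQ _ (by simp [Qset])
  have hq2 : loopHyp j ∈ graphArr G := hQ _ (by simp [Qset])
  have hq3 : edgeHyp i j true ∈ graphArr G := hQ _ (by simp [Qset])
  have hq4 : edgeHyp i j false ∈ graphArr G := hQ _ (by simp [Qset])
  have hnotle : ¬ coordFlat i j ≤ edgeHyp i k u := by
    intro hle
    have h1 := hle (single_mem_coordFlat (Ne.symm hik) (Ne.symm hjk) 1)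
    rw [mem_edgeHyp', Pi.single_eq_of_ne hik, Pi.single_eq_same] at h1
    exact sgn_ne_zero u (by linear_combination h1)
  -- η (loop j) = η (edge ik u)
  have e2 : η ⟨loopHyp j, hq2⟩ = η ⟨edgeHyp i k u, hLA⟩ := by
    apply eq_of_small Nat.prime_two (by norm_num) η hη _ _ ?_ {loopHyp j, edgeHyp i k u}
      (card_pair_le _ _)
    · intro L hL hle
      rcases classify_M G hik (Ne.symm hij) hjk u L hL hle with rfl | rfl <;> simp
    · intro h
      have h' : loopHyp j = edgeHyp i k u := h
      exact hnotle (h' ▸ coordFlat_le_of_mem_Qset (by simp [Qset] : loopHyp j ∈ Qset i j))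
  -- η (edge ij s) = η (edge ik u) for both signs
  have e34 : ∀ s : Bool, ∀ hs : edgeHyp i j s ∈ graphArr G,
      η ⟨edgeHyp i j s, hs⟩ = η ⟨edgeHyp i k u, hLA⟩ := by
    intro s hs
    apply eq_of_small Nat.prime_two (by norm_num) η hη _ _ ?_
      {edgeHyp i j s, edgeHyp i k u, edgeHyp j k (xor s u)} (card_triple_le _ _ _)
    · intro L hL hle
      rcases classify_T G hij hik hjk s u L hL hle with rfl | rfl | rfl <;> simp
    · intro h
      have h' : edgeHyp i j s = edgeHyp i k u := h
      exact hnotle (h' ▸ coordFlat_le_edgeHyp i j s)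
  -- the quadruple flat and its sum
  have hflat : IsRank2Flat (graphArr G) (coordFlat i j) :=
    ⟨loopHyp i, hq1, loopHyp j, hq2, loopHyp_ne hij, rfl⟩
  have hd12 := loopHyp_ne hij
  have hd13 := loopHyp_ne_edgeHyp i hij true
  have hd14 := loopHyp_ne_edgeHyp i hij false
  have hd23 := loopHyp_ne_edgeHyp j hij true
  have hd24 := loopHyp_ne_edgeHyp j hij false
  have hd34 := edgeHyp_sign_ne hij
  have hm1 : (⟨loopHyp i, hq1⟩ : {H // H ∈ graphArr G}) ∉
      ({⟨loopHyp j, hq2⟩, ⟨edgeHyp i j true, hq3⟩, ⟨edgeHyp i j false, hq4⟩} :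
        Finset {H // H ∈ graphArr G}) := by
    simp [Subtype.ext_iff, hd12, hd13, hd14]
  have hm2 : (⟨loopHyp j, hq2⟩ : {H // H ∈ graphArr G}) ∉
      ({⟨edgeHyp i j true, hq3⟩, ⟨edgeHyp i j false, hq4⟩} :
        Finset {H // H ∈ graphArr G}) := by
    simp [Subtype.ext_iff, hd23, hd24]
  have hm3 : (⟨edgeHyp i j true, hq3⟩ : {H // H ∈ graphArr G}) ∉
      ({⟨edgeHyp i j false, hq4⟩} : Finset {H // H ∈ graphArr G}) := by
    simp [Subtype.ext_iff, hd34]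
  have hFeq : flatHyps (graphArr G) (coordFlat i j) =
      ({⟨loopHyp i, hq1⟩, ⟨loopHyp j, hq2⟩, ⟨edgeHyp i j true, hq3⟩,
        ⟨edgeHyp i j false, hq4⟩} : Finset {H // H ∈ graphArr G}) := by
    ext L
    rw [mem_flatHyps_iff]
    constructor
    · intro hle
      have hcp := classify_P G hij L.1 L.2 hle
      simp only [Qset, Finset.mem_insert, Finset.mem_singleton] at hcp
      rcases hcp with h | h | h | h <;> simp [Subtype.ext_iff, h]
    · intro hL
      simp only [Finset.mem_insert, Finset.mem_singleton] at hL
      rcases hL with rfl | rfl | rfl | rfl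
      · exact inf_le_left
      · exact inf_le_right
      · exact coordFlat_le_edgeHyp i j true
      · exact coordFlat_le_edgeHyp i j false
  have hcard4 : (flatHyps (graphArr G) (coordFlat i j)).card = 4 := by
    rw [hFeq, Finset.card_insert_of_notMem hm1, Finset.card_insert_of_notMem hm2,
      Finset.card_insert_of_notMem hm3, Finset.card_singleton]
  have hsum := (hη (coordFlat i j) hflat).1 (by rw [hcard4]; norm_num)
  rw [hFeq, Finset.sum_insert hm1, Finset.sum_insert hm2, Finset.sum_insert hm3,
    Finset.sum_singleton] at hsum
  rw [e2, e34 true hq3, e34 false hq4] at hsum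
  have key : ∀ a c : ZMod 2, a + (c + (c + c)) = 0 → a = c := by decide
  have e1 : η ⟨loopHyp i, hq1⟩ = η ⟨edgeHyp i k u, hLA⟩ := key _ _ hsum
  refine ⟨η ⟨edgeHyp i k u, hLA⟩, ?_⟩
  intro M hM hMQ
  simp only [Qset, Finset.mem_insert, Finset.mem_singleton] at hMQ
  rcases hMQ with rfl | rfl | rfl | rfl
  · exact e1
  · exact e2
  · exact e34 true hM
  · exact e34 false hM
end Quad
section QuadConst
variable {l : ℕ} {G : SGraph l}

lemma quad_const (hrk : 3 ≤ arrRank (graphArr G))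
    (η : {H // H ∈ graphArr G} → ZMod 2) (hη : IsCocycle 2 (graphArr G) η)
    (i j : Fin l) (hij : i ≠ j) (hQ : ∀ M ∈ Qset i j, M ∈ graphArr G) :
    ∃ c, ∀ (M : Hyp l) (hM : M ∈ graphArr G), M ∈ Qset i j → η ⟨M, hM⟩ = c := by
  have hq1 : loopHyp i ∈ graphArr G := hQ _ (by simp [Qset])
  have hq2 : loopHyp j ∈ graphArr G := hQ _ (by simp [Qset])
  have hq3 : edgeHyp i j true ∈ graphArr G := hQ _ (by simp [Qset])
  have hq4 : edgeHyp i j false ∈ graphArr G := hQ _ (by simp [Qset])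
  have hQ' : ∀ M ∈ Qset j i, M ∈ graphArr G := by
    rw [← Qset_comm]; exact hQ
  obtain ⟨L, hLA, hnle⟩ := exists_not_le hrk i j
  rcases (mem_graphArr G L).mp hLA with ⟨k, _, rfl⟩ | ⟨⟨c, d, u⟩, hed, rfl⟩
  · -- L = loopHyp k
    have hki : k ≠ i := by rintro rfl; exact hnle inf_le_left
    have hkj : k ≠ j := by rintro rfl; exact hnle inf_le_right
    by_cases h1 : ∀ M ∈ Qset i k, M ∈ graphArr G
    · exact shared_case η hη i j k hij (Ne.symm hki) (Ne.symm hkj) hQ true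
        (h1 _ (by simp [Qset]))
    · by_cases h2 : ∀ M ∈ Qset j k, M ∈ graphArr G
      · obtain ⟨c, hc⟩ := shared_case η hη j i k (Ne.symm hij) (Ne.symm hkj) (Ne.symm hki)
          hQ' true (h2 _ (by simp [Qset]))
        refine ⟨c, fun M hM hMQ => hc M hM ?_⟩
        rw [← Qset_comm]; exact hMQ
      · push_neg at h1 h2
        obtain ⟨M1, hM1Q, hM1A⟩ := h1
        obtain ⟨M2, hM2Q, hM2A⟩ := h2
        -- η (loop i) = η (loop k)
        have ea : η ⟨loopHyp i, hq1⟩ = η ⟨loopHyp k, hLA⟩ := by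
          apply eq_of_small Nat.prime_two (by norm_num) η hη _ _ (loopHyp_ne (Ne.symm hki))
            ((Qset i k).erase M1) ?_ ?_
          · rw [Finset.card_erase_of_mem hM1Q]
            have := Qset_card i k
            omega
          · intro L' hL' hle
            rw [Finset.mem_erase]
            exact ⟨fun h => hM1A (h ▸ hL'), classify_P G (Ne.symm hki) L' hL' hle⟩
        have eb : η ⟨loopHyp j, hq2⟩ = η ⟨loopHyp k, hLA⟩ := by
          apply eq_of_small Nat.prime_two (by norm_num) η hη _ _ (loopHyp_ne (Ne.symm hkj))
            ((Qset j k).erase M2) ?_ ?_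
          · rw [Finset.card_erase_of_mem hM2Q]
            have := Qset_card j k
            omega
          · intro L' hL' hle
            rw [Finset.mem_erase]
            exact ⟨fun h => hM2A (h ▸ hL'), classify_P G (Ne.symm hkj) L' hL' hle⟩
        have ec : ∀ s : Bool, ∀ hs : edgeHyp i j s ∈ graphArr G,
            η ⟨edgeHyp i j s, hs⟩ = η ⟨loopHyp k, hLA⟩ := by
          intro s hs
          apply eq_of_small Nat.prime_two (by norm_num) η hη _ _
            ((loopHyp_ne_edgeHyp k hij s).symm) {loopHyp k, edgeHyp i j s}
            (card_pair_le _ _) ?_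
          intro L' hL' hle
          rw [inf_comm] at hle
          rcases classify_M G hij hki hkj s L' hL' hle with rfl | rfl <;> simp
        refine ⟨η ⟨loopHyp k, hLA⟩, fun M hM hMQ => ?_⟩
        simp only [Qset, Finset.mem_insert, Finset.mem_singleton] at hMQ
        rcases hMQ with rfl | rfl | rfl | rfl
        · exact ea
        · exact eb
        · exact ec true hM
        · exact ec false hM
  · -- L = edgeHyp c d u
    simp only at hLA hnle
    have hcd : c ≠ d := Fin.ne_of_lt (G.edges_lt _ hed)
    by_cases hci : c = i
    · have hid : i ≠ d := by rw [← hci]; exact hcd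
      have hdj : d ≠ j := by
        intro h
        exact hnle (by rw [hci, h]; exact coordFlat_le_edgeHyp i j u)
      have hLA' : edgeHyp i d u ∈ graphArr G := hci ▸ hLA
      exact shared_case η hη i j d hij hid (Ne.symm hdj) hQ u hLA'
    · by_cases hcj : c = j
      · have hjd : j ≠ d := by rw [← hcj]; exact hcd
        have hdi : d ≠ i := by
          intro h
          exact hnle (by
            rw [hcj, h, edgeHyp_comm]
            exact coordFlat_le_edgeHyp i j u)
        have hLA' : edgeHyp j d u ∈ graphArr G := hcj ▸ hLA
        obtain ⟨c', hc'⟩ := shared_case η hη j i d (Ne.symm hij) hjd (Ne.symm hdi) hQ' u hLA'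
        refine ⟨c', fun M hM hMQ => hc' M hM ?_⟩
        rw [← Qset_comm]; exact hMQ
      · by_cases hdi : d = i
        · have hLA' : edgeHyp i c u ∈ graphArr G := by
            rw [edgeHyp_comm i c u, ← hdi]; exact hLA
          exact shared_case η hη i j c hij (Ne.symm hci) (Ne.symm hcj) hQ u hLA'
        · by_cases hdj : d = j
          · have hLA' : edgeHyp j c u ∈ graphArr G := by
              rw [edgeHyp_comm j c u, ← hdj]; exact hLA
            obtain ⟨c', hc'⟩ := shared_case η hη j i c (Ne.symm hij) (Ne.symm hcj)
              (Ne.symm hci) hQ' u hLA'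
            refine ⟨c', fun M hM hMQ => hc' M hM ?_⟩
            rw [← Qset_comm]; exact hMQ
          · -- disjoint
            have eloop : ∀ a : Fin l, a ≠ c → a ≠ d → ∀ ha : loopHyp a ∈ graphArr G,
                η ⟨loopHyp a, ha⟩ = η ⟨edgeHyp c d u, hLA⟩ := by
              intro a hac had ha
              apply eq_of_small Nat.prime_two (by norm_num) η hη _ _
                (loopHyp_ne_edgeHyp a hcd u) {loopHyp a, edgeHyp c d u}
                (card_pair_le _ _) ?_
              intro L' hL' hle
              rcases classify_M G hcd hac had u L' hL' hle with rfl | rfl <;> simp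
            have eedge : ∀ s : Bool, ∀ hs : edgeHyp i j s ∈ graphArr G,
                η ⟨edgeHyp i j s, hs⟩ = η ⟨edgeHyp c d u, hLA⟩ := by
              intro s hs
              apply eq_of_small Nat.prime_two (by norm_num) η hη _ _ ?_
                {edgeHyp i j s, edgeHyp c d u} (card_pair_le _ _) ?_
              · intro h
                have h' : edgeHyp i j s = edgeHyp c d u := h
                exact hnle (h' ▸ coordFlat_le_edgeHyp i j s)
              · intro L' hL' hle
                rcases classify_D G hij hcd (Ne.symm hci) (Ne.symm hdi)
                  (Ne.symm hcj) (Ne.symm hdj) s u L' hL' hle with rfl | rfl <;> simp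
            refine ⟨η ⟨edgeHyp c d u, hLA⟩, fun M hM hMQ => ?_⟩
            simp only [Qset, Finset.mem_insert, Finset.mem_singleton] at hMQ
            rcases hMQ with rfl | rfl | rfl | rfl
            · exact eloop i (Ne.symm hci) (Ne.symm hdi) hM
            · exact eloop j (Ne.symm hcj) (Ne.symm hdj) hM
            · exact eedge true hM
            · exact eedge false hM
end QuadConst
section Main
variable {l : ℕ} {G : SGraph l}

lemma inf_loop_edge_left {c d : Fin l} (t : Bool) :
    loopHyp c ⊓ edgeHyp c d t = coordFlat c d := by
  ext x
  rw [mem_mixFlat, mem_coordFlat]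
  constructor
  · rintro ⟨h1, h2⟩
    refine ⟨h1, ?_⟩
    have h3 : sgn t * x d = 0 := by linear_combination h2 - h1
    exact (mul_eq_zero.mp h3).resolve_left (sgn_ne_zero t)
  · rintro ⟨h1, h2⟩
    refine ⟨h1, ?_⟩
    rw [h1, h2]; ring

lemma inf_loop_edge_right {c d : Fin l} (t : Bool) :
    loopHyp d ⊓ edgeHyp c d t = coordFlat c d := by
  ext x
  rw [mem_mixFlat, mem_coordFlat]
  constructor
  · rintro ⟨h1, h2⟩
    exact ⟨by linear_combination h2 - sgn t * h1, h1⟩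
  · rintro ⟨h1, h2⟩
    refine ⟨h2, ?_⟩
    rw [h1, h2]; ring

lemma inf_edge_edge {a b : Fin l} {s t : Bool} (hst : s ≠ t) :
    edgeHyp a b s ⊓ edgeHyp a b t = coordFlat a b := by
  ext x
  rw [Submodule.mem_inf, mem_edgeHyp', mem_edgeHyp', mem_coordFlat]
  constructor
  · rintro ⟨h1, h2⟩
    cases s <;> cases t
    · exact absurd rfl hst
    · norm_num [sgn] at h1 h2
      exact ⟨by linear_combination (h1 + h2) / 2, by linear_combination (h2 - h1) / 2⟩
    · norm_num [sgn] at h1 h2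
      exact ⟨by linear_combination (h1 + h2) / 2, by linear_combination (h1 - h2) / 2⟩
    · exact absurd rfl hst
  · rintro ⟨h1, h2⟩
    rw [h1, h2]
    constructor <;> ring

lemma ptype (hrk : 3 ≤ arrRank (graphArr G)) {p : ℕ} (hp : p.Prime) (hp3 : p ≠ 3)
    (η : {H // H ∈ graphArr G} → ZMod p) (hη : IsCocycle p (graphArr G) η)
    (i j : Fin l) (hij : i ≠ j) (H K : {H // H ∈ graphArr G})
    (hne : (H : Hyp l) ≠ (K : Hyp l)) (hHQ : (H : Hyp l) ∈ Qset i j)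
    (hKQ : (K : Hyp l) ∈ Qset i j)
    (hX : (H : Hyp l) ⊓ (K : Hyp l) = coordFlat i j) :
    η H = η K := by
  by_cases hp2 : p = 2
  · subst hp2
    by_cases hfull : ∀ M ∈ Qset i j, M ∈ graphArr G
    · obtain ⟨c, hc⟩ := quad_const hrk η hη i j hij hfull
      have h1 : η ⟨(H : Hyp l), H.2⟩ = c := hc _ H.2 hHQ
      have h2 : η ⟨(K : Hyp l), K.2⟩ = c := hc _ K.2 hKQ
      exact h1.trans h2.symm
    · push_neg at hfull
      obtain ⟨M, hMQ, hMA⟩ := hfull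
      apply eq_of_small Nat.prime_two (by norm_num) η hη H K hne ((Qset i j).erase M) ?_ ?_
      · rw [Finset.card_erase_of_mem hMQ]
        have := Qset_card i j
        omega
      · intro L hL hle
        rw [Finset.mem_erase]
        refine ⟨fun h => hMA (h ▸ hL), classify_P G hij L hL ?_⟩
        rw [← hX]; exact hle
  · have hflat : IsRank2Flat (graphArr G) ((H : Hyp l) ⊓ (K : Hyp l)) :=
      ⟨H, H.2, K, K.2, hne, rfl⟩
    have hHF : H ∈ flatHyps (graphArr G) ((H : Hyp l) ⊓ (K : Hyp l)) :=
      mem_flatHyps_iff.mpr inf_le_left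
    have hKF : K ∈ flatHyps (graphArr G) ((H : Hyp l) ⊓ (K : Hyp l)) :=
      mem_flatHyps_iff.mpr inf_le_right
    have hne' : H ≠ K := fun h => hne (congrArg _ h)
    have hlow : 2 ≤ (flatHyps (graphArr G) ((H : Hyp l) ⊓ (K : Hyp l))).card :=
      Finset.one_lt_card.mpr ⟨H, hHF, K, hKF, hne'⟩
    have hup : (flatHyps (graphArr G) ((H : Hyp l) ⊓ (K : Hyp l))).card ≤ 4 := by
      refine le_trans (Finset.card_le_card_of_injOn (fun L => (L : Hyp l)) ?_ ?_)
        (Qset_card i j)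
      · intro L hL
        refine classify_P G hij L L.2 ?_
        rw [← hX]; exact mem_flatHyps_iff.mp hL
      · intro x _ y _ hxy; exact Subtype.ext hxy
    have hnd : ¬ p ∣ (flatHyps (graphArr G) ((H : Hyp l) ⊓ (K : Hyp l))).card := by
      intro hdvd
      have h5 := Nat.le_of_dvd (by omega) hdvd
      have h2le := hp.two_le
      have h4 : p ≤ 4 := le_trans h5 hup
      interval_cases p
      · exact hp2 rfl
      · exact hp3 rfl
      · exact absurd hp (by norm_num)
    exact (hη _ hflat).2 hnd H hHF K hKF

lemma loop_edge (hrk : 3 ≤ arrRank (graphArr G)) {p : ℕ} (hp : p.Prime) (hp3 : p ≠ 3)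
    (η : {H // H ∈ graphArr G} → ZMod p) (hη : IsCocycle p (graphArr G) η)
    (H K : {H // H ∈ graphArr G}) (a c d : Fin l) (t : Bool) (hcd : c ≠ d)
    (hHv : (H : Hyp l) = loopHyp a) (hKv : (K : Hyp l) = edgeHyp c d t)
    (hne : (H : Hyp l) ≠ (K : Hyp l)) : η H = η K := by
  by_cases hac : a = c
  · refine ptype hrk hp hp3 η hη c d hcd H K hne ?_ ?_ ?_
    · rw [hHv, hac]; simp [Qset]
    · rw [hKv]; cases t <;> simp [Qset]
    · rw [hHv, hKv, hac]; exact inf_loop_edge_left t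
  · by_cases had : a = d
    · refine ptype hrk hp hp3 η hη c d hcd H K hne ?_ ?_ ?_
      · rw [hHv, had]; simp [Qset]
      · rw [hKv]; cases t <;> simp [Qset]
      · rw [hHv, hKv, had]; exact inf_loop_edge_right t
    · apply eq_of_small hp hp3 η hη H K hne {loopHyp a, edgeHyp c d t} (card_pair_le _ _) ?_
      intro L hL hle
      rw [hHv, hKv] at hle
      rcases classify_M G hcd hac had t L hL hle with rfl | rfl <;> simp
end Main

/-- Let `Γ` be a graph in `[l]` whose graphic arrangement `A(Γ)` has rank at least 3, and
let `p` be a prime with `p ≠ 3`. Then every `p`-cocycle `η : A(Γ) → 𝔽_p` is constant on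
`A(Γ)`; that is, `β_p(Γ) = 0`. -/
theorem betaP_vanishes_graphic {l : ℕ} (G : SGraph l)
    (hrk : 3 ≤ arrRank (graphArr G)) (p : ℕ) (hp : p.Prime) (hp3 : p ≠ 3)
    (η : {H // H ∈ graphArr G} → ZMod p) (hη : IsCocycle p (graphArr G) η) :
    ∀ H K : {H // H ∈ graphArr G}, η H = η K := by
  intro H K
  by_cases hv : (H : Hyp l) = (K : Hyp l)
  · exact congrArg η (Subtype.ext hv)
  rcases (mem_graphArr G (H : Hyp l)).mp H.2 with ⟨a, _, hHv⟩ | ⟨⟨a, b, s⟩, heH, hHv⟩ <;>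
    rcases (mem_graphArr G (K : Hyp l)).mp K.2 with ⟨c, _, hKv⟩ | ⟨⟨c, d, t⟩, heK, hKv⟩
  · -- loop / loop
    have hac : a ≠ c := by
      rintro rfl
      exact hv (by rw [hHv, hKv])
    refine ptype hrk hp hp3 η hη a c hac H K hv ?_ ?_ ?_
    · rw [hHv]; simp [Qset]
    · rw [hKv]; simp [Qset]
    · rw [hHv, hKv]; rfl
  · -- loop / edge
    simp only at hKv
    exact loop_edge hrk hp hp3 η hη H K a c d t (Fin.ne_of_lt (G.edges_lt _ heK)) hHv hKv hv
  · -- edge / loop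
    simp only at hHv
    exact (loop_edge hrk hp hp3 η hη K H c a b s (Fin.ne_of_lt (G.edges_lt _ heH)) hKv hHv
      (Ne.symm hv)).symm
  · -- edge / edge
    simp only at hHv hKv
    have hlt1 : a < b := G.edges_lt _ heH
    have hlt2 : c < d := G.edges_lt _ heK
    have hab : a ≠ b := Fin.ne_of_lt hlt1
    have hcd : c ≠ d := Fin.ne_of_lt hlt2
    by_cases hac : a = c
    · by_cases hbd : b = d
      · -- same pair, different signs
        have hst : s ≠ t := by
          rintro rfl
          exact hv (by rw [hHv, hKv, hac, hbd])
        refine ptype hrk hp hp3 η hη a b hab H K hv ?_ ?_ ?_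
        · rw [hHv]; cases s <;> simp [Qset]
        · rw [hKv, ← hac, ← hbd]; cases t <;> simp [Qset]
        · rw [hHv, hKv, ← hac, ← hbd]; exact inf_edge_edge hst
      · -- shared first vertex a = c
        have had : a ≠ d := by rw [hac]; exact Fin.ne_of_lt hlt2
        apply eq_of_small hp hp3 η hη H K hv
          {edgeHyp a b s, edgeHyp a d t, edgeHyp b d (xor s t)} (card_triple_le _ _ _) ?_
        intro L hL hle
        rw [hHv, hKv, ← hac] at hle
        rcases classify_T G hab had hbd s t L hL hle with rfl | rfl | rfl <;> simp
    · by_cases hbc : b = c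
      · -- a < b = c < d : shared vertex b
        have hbd' : b < d := by rw [hbc]; exact hlt2
        have hadlt : a < d := lt_trans hlt1 hbd'
        apply eq_of_small hp hp3 η hη H K hv
          {edgeHyp b a s, edgeHyp b d t, edgeHyp a d (xor s t)} (card_triple_le _ _ _) ?_
        intro L hL hle
        rw [hHv, hKv, edgeHyp_comm a b s, ← hbc] at hle
        rcases classify_T G (Ne.symm hab) (Fin.ne_of_lt hbd') (Fin.ne_of_lt hadlt) s t L hL
          hle with rfl | rfl | rfl <;> simp
      · by_cases had : a = d
        · -- c < d = a < b : shared vertex a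
          have hca : c < a := by rw [had]; exact hlt2
          have hcb : c < b := lt_trans hca hlt1
          apply eq_of_small hp hp3 η hη H K hv
            {edgeHyp a b s, edgeHyp a c t, edgeHyp b c (xor s t)} (card_triple_le _ _ _) ?_
          intro L hL hle
          rw [hHv, hKv, edgeHyp_comm c d t, ← had] at hle
          rcases classify_T G hab (Ne.symm (Fin.ne_of_lt hca)) (Ne.symm (Fin.ne_of_lt hcb))
            s t L hL hle with rfl | rfl | rfl <;> simp
        · by_cases hbd : b = d
          · -- shared vertex b = d
            apply eq_of_small hp hp3 η hη H K hv
              {edgeHyp b a s, edgeHyp b c t, edgeHyp a c (xor s t)} (card_triple_le _ _ _) ?_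
            intro L hL hle
            rw [hHv, hKv, edgeHyp_comm a b s, edgeHyp_comm c d t, ← hbd] at hle
            rcases classify_T G (Ne.symm hab) hbc hac s t L hL hle with rfl | rfl | rfl <;> simp
          · -- disjoint
            apply eq_of_small hp hp3 η hη H K hv
              {edgeHyp a b s, edgeHyp c d t} (card_pair_le _ _) ?_
            intro L hL hle
            rw [hHv, hKv] at hle
            rcases classify_D G hab hcd hac had hbc hbd s t L hL hle with rfl | rfl <;> simp
end
end

section
/- Let Γ be a graph in [l] and let p be a prime with p ∉ {2, 3}. Then every p-cocycle η : A(Γ) → 𝔽_p is constant on A(Γ); that is, β_p(Γ) = 0. -/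
open scoped Classical

noncomputable section

/-!
Every hyperplane of `A(Γ)` is `ker (c ⬝ᵥ ·)` for a normal vector `c` equal to `e_i` or to
`e_i ± e_j` with `i < j`; its first nonzero coordinate is `1`, so proportional normals coincide.
If `X = H ∩ K`, the normals of the hyperplanes in `A_X` lie in the plane spanned by the normals
`u`, `w` of `H` and `K`, and their supports lie in `supp u ∪ supp w`, a set of at most four
coordinates. Either every such normal vanishes at a coordinate of that set, and a normal in the
plane is determined by such a zero, or one of them is nonzero on the whole set, which is then
contained in a pair `{s, t}` carrying only four normals. Hence `m_X ≤ 4 < p`, the cocycle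
condition makes `η` constant on `A_X`, and any two hyperplanes `H ≠ K` lie in `A_{H ∩ K}`.
-/

open Module Submodule Function

section SpanPair

variable {ι : Type*}

theorem support_subset_union_of_mem_span_pair {R : Type*} [Semiring R] {u w x : ι → R}
    (hx : x ∈ span R {u, w}) : support x ⊆ support u ∪ support w := by
  obtain ⟨a, b, rfl⟩ := mem_span_pair.mp hx
  exact (support_add _ _).trans
    (Set.union_subset_union (support_const_smul_subset a u) (support_const_smul_subset b w))

theorem exists_eq_smul_of_mem_span_pair_of_apply_eq_zero {𝕜 : Type*} [Field 𝕜]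
    {u w x y : ι → 𝕜} {t : ι} (hx : x ∈ span 𝕜 {u, w}) (hy : y ∈ span 𝕜 {u, w})
    (ht : u t ≠ 0) (hxt : x t = 0) (hyt : y t = 0) (hx0 : x ≠ 0) : ∃ a : 𝕜, y = a • x := by
  have key : ∀ v ∈ span 𝕜 {u, w}, v t = 0 → ∃ b : 𝕜, u t • v = b • (u t • w - w t • u) := by
    intro v hv hvt
    obtain ⟨a, b, rfl⟩ := mem_span_pair.mp hv
    refine ⟨b, funext fun k => ?_⟩
    simp only [Pi.add_apply, Pi.smul_apply, Pi.sub_apply, smul_eq_mul] at hvt ⊢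
    linear_combination u k * hvt
  obtain ⟨b, hb⟩ := key x hx hxt
  obtain ⟨b', hb'⟩ := key y hy hyt
  have hb0 : b ≠ 0 := by
    rintro rfl
    rw [zero_smul, smul_eq_zero] at hb
    exact hb.elim ht hx0
  refine ⟨b' / b, smul_right_injective _ ht (show u t • y = u t • ((b' / b) • x) from ?_)⟩
  rw [hb', smul_comm, hb, smul_smul, div_mul_cancel₀ _ hb0]

end SpanPair

theorem mem_span_pair_of_ker_inf_ker_le_ker {𝕜 E : Type*} [Field 𝕜] [AddCommGroup E]
    [Module 𝕜 E] {f g h : Dual 𝕜 E}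
    (hle : LinearMap.ker f ⊓ LinearMap.ker g ≤ LinearMap.ker h) : h ∈ span 𝕜 {f, g} := by
  have := mem_span_of_iInf_ker_le_ker (L := ![f, g])
    ((le_inf (iInf_le _ 0) (iInf_le _ 1)).trans hle)
  rwa [Matrix.range_cons_cons_empty] at this

section DotProduct

variable {n : Type*} [Fintype n] [DecidableEq n]

theorem dotProductEquiv_single {R : Type*} [CommSemiring R] (i : n) (a : R) :
    dotProductEquiv R n (Pi.single i a) = a • LinearMap.proj i := by
  ext x
  simp [Pi.single_apply, eq_comm]

theorem mem_span_pair_of_ker_dotProductEquiv_inf_le {𝕜 : Type*} [Field 𝕜] {u w c : n → 𝕜}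
    (hle : LinearMap.ker (dotProductEquiv 𝕜 n u) ⊓ LinearMap.ker (dotProductEquiv 𝕜 n w) ≤
      LinearMap.ker (dotProductEquiv 𝕜 n c)) : c ∈ span 𝕜 {u, w} := by
  obtain ⟨a, b, hab⟩ := mem_span_pair.mp (mem_span_pair_of_ker_inf_ker_le_ker hle)
  exact mem_span_pair.mpr ⟨a, b, (dotProductEquiv 𝕜 n).injective (by simpa using hab)⟩

end DotProduct

section GraphicNormal

variable {𝕜 ι : Type*} [Field 𝕜] [LinearOrder ι]

/-- Normal vectors of the hyperplanes of a graphic arrangement: `e_i` for a loop at `i` and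
`e_i + ε e_j` with `i < j`, `ε = ±1` for a signed edge. -/
def IsGraphicNormal (c : ι → 𝕜) : Prop :=
  (∃ i, c = Pi.single i 1) ∨
    ∃ i j ε, i < j ∧ (ε = 1 ∨ ε = -1) ∧ c = Pi.single i 1 + Pi.single j ε

namespace IsGraphicNormal

variable {u w c d : ι → 𝕜}

theorem exists_support_subset_pair (hc : IsGraphicNormal c) :
    ∃ s t, s ≤ t ∧ support c ⊆ {s, t} := by
  rcases hc with ⟨i, rfl⟩ | ⟨i, j, ε, hij, -, rfl⟩
  · exact ⟨i, i, le_rfl, Pi.support_single_subset.trans (by simp)⟩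
  · refine ⟨i, j, hij.le, (support_add _ _).trans (Set.union_subset ?_ ?_)⟩
    · exact Pi.support_single_subset.trans (by simp)
    · exact Pi.support_single_subset.trans (by simp)

theorem exists_apply_eq_one (hc : IsGraphicNormal c) : ∃ i, c i = 1 ∧ ∀ k < i, c k = 0 := by
  rcases hc with ⟨i, rfl⟩ | ⟨i, j, ε, hij, -, rfl⟩
  · exact ⟨i, by simp, fun k hk => by simp [hk.ne]⟩
  · exact ⟨i, by simp [hij.ne], fun k hk => by simp [hk.ne, (hk.trans hij).ne]⟩

theorem ne_zero (hc : IsGraphicNormal c) : c ≠ 0 := by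
  obtain ⟨i, hi, -⟩ := hc.exists_apply_eq_one
  rintro rfl
  exact zero_ne_one hi

theorem eq_of_eq_smul (hc : IsGraphicNormal c) (hd : IsGraphicNormal d) {a : 𝕜}
    (h : d = a • c) : d = c := by
  obtain ⟨i, hci, hc0⟩ := hc.exists_apply_eq_one
  obtain ⟨j, hdj, hd0⟩ := hd.exists_apply_eq_one
  have hdi : d i = a := by simp [h, hci]
  rcases lt_trichotomy i j with hij | rfl | hji
  · refine absurd ?_ hd.ne_zero
    rw [h, ← hdi, hd0 i hij, zero_smul]
  · rw [h, ← hdi, hdj, one_smul]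
  · simp [h, hc0 j hji] at hdj

theorem mem_of_support_subset_pair (hc : IsGraphicNormal c) {s t : ι} (hst : s ≤ t)
    (h : support c ⊆ {s, t}) :
    c ∈ ({(Pi.single s 1 : ι → 𝕜), Pi.single t 1, Pi.single s 1 + Pi.single t 1,
      Pi.single s 1 + Pi.single t (-1)} : Finset (ι → 𝕜)) := by
  rcases hc with ⟨i, rfl⟩ | ⟨i, j, ε, hij, hε, rfl⟩
  · rcases h (by simp : i ∈ support (Pi.single i (1 : 𝕜))) with rfl | rfl <;> simp
  · have hi : i = s ∨ i = t := h (by simp [hij.ne])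
    have hj : j = s ∨ j = t := h (by rcases hε with rfl | rfl <;> simp [hij.ne'])
    obtain ⟨rfl, rfl⟩ : i = s ∧ j = t := by
      rcases hi with rfl | rfl <;> rcases hj with rfl | rfl
      all_goals first | exact ⟨rfl, rfl⟩ | exact absurd hij (by order)
    rcases hε with rfl | rfl <;> simp

theorem eq_of_mem_span_pair_of_apply_eq_zero (hc : IsGraphicNormal c) (hd : IsGraphicNormal d)
    (hcs : c ∈ span 𝕜 {u, w}) (hds : d ∈ span 𝕜 {u, w}) {t : ι} (ht : u t ≠ 0 ∨ w t ≠ 0)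
    (hct : c t = 0) (hdt : d t = 0) : d = c := by
  obtain ⟨a, ha⟩ : ∃ a : 𝕜, d = a • c := by
    rcases ht with hu | hw
    · exact exists_eq_smul_of_mem_span_pair_of_apply_eq_zero hcs hds hu hct hdt hc.ne_zero
    · rw [Set.pair_comm] at hcs hds
      exact exists_eq_smul_of_mem_span_pair_of_apply_eq_zero hcs hds hw hct hdt hc.ne_zero
  exact hc.eq_of_eq_smul hd ha

theorem card_le_four_of_mem_span_pair (hu : IsGraphicNormal u) (hw : IsGraphicNormal w)
    {S : Finset (ι → 𝕜)} (hS : ∀ c ∈ S, IsGraphicNormal c ∧ c ∈ span 𝕜 {u, w}) :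
    S.card ≤ 4 := by
  by_cases hmiss : ∀ c ∈ S, ∃ k, (u k ≠ 0 ∨ w k ≠ 0) ∧ c k = 0
  · obtain ⟨i₁, j₁, -, hu₂⟩ := hu.exists_support_subset_pair
    obtain ⟨i₂, j₂, -, hw₂⟩ := hw.exists_support_subset_pair
    have : Nonempty ι := ⟨i₁⟩
    choose! f hf hf0 using hmiss
    refine (Finset.card_le_card_of_injOn f (t := {i₁, j₁, i₂, j₂}) (fun c hc => ?_)
      (fun c hc d hd hcd => ?_)).trans Finset.card_le_four
    · rcases hf c hc with h | h
      · obtain h | h : f c = i₁ ∨ f c = j₁ := hu₂ h <;> simp [h]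
      · obtain h | h : f c = i₂ ∨ f c = j₂ := hw₂ h <;> simp [h]
    · exact ((hS d hd).1.eq_of_mem_span_pair_of_apply_eq_zero (hS c hc).1 (hS d hd).2
        (hS c hc).2 (hf d hd) (hf0 d hd) (hcd ▸ hf0 c hc))
  · push Not at hmiss
    obtain ⟨c₀, hc₀, hc₀k⟩ := hmiss
    obtain ⟨s, t, hst, hc₀st⟩ := (hS c₀ hc₀).1.exists_support_subset_pair
    refine (Finset.card_le_card fun c hc => (hS c hc).1.mem_of_support_subset_pair hst
      fun k hk => hc₀st (hc₀k k ?_)).trans Finset.card_le_four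
    simpa using support_subset_union_of_mem_span_pair (hS c hc).2 hk

end IsGraphicNormal

end GraphicNormal

theorem exists_isGraphicNormal_of_mem_graphArr {l : ℕ} {G : SGraph l} {H : Hyp l}
    (hH : H ∈ graphArr G) :
    ∃ c, IsGraphicNormal c ∧ H = LinearMap.ker (dotProductEquiv ℂ (Fin l) c) := by
  rcases Finset.mem_union.mp hH with h | h
  · obtain ⟨i, -, rfl⟩ := Finset.mem_image.mp h
    exact ⟨Pi.single i 1, .inl ⟨i, rfl⟩, by rw [dotProductEquiv_single, one_smul, loopHyp]⟩
  · obtain ⟨⟨i, j, b⟩, he, rfl⟩ := Finset.mem_image.mp h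
    refine ⟨Pi.single i 1 + Pi.single j (if b then 1 else -1),
      .inr ⟨i, j, _, G.edges_lt _ he, by cases b <;> simp, rfl⟩, ?_⟩
    rw [map_add, dotProductEquiv_single, dotProductEquiv_single, one_smul, edgeHyp]

theorem card_flatHyps_inf_le_four {l : ℕ} (G : SGraph l) {H K : Hyp l}
    (hH : H ∈ graphArr G) (hK : K ∈ graphArr G) : (flatHyps (graphArr G) (H ⊓ K)).card ≤ 4 := by
  obtain ⟨u, hu, rfl⟩ := exists_isGraphicNormal_of_mem_graphArr hH
  obtain ⟨w, hw, rfl⟩ := exists_isGraphicNormal_of_mem_graphArr hK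
  choose c hc hLc using
    fun L : {L // L ∈ graphArr G} => exists_isGraphicNormal_of_mem_graphArr L.2
  have hinj : Injective c := fun L L' h => Subtype.ext ((hLc L).trans (h ▸ (hLc L').symm))
  rw [← Finset.card_image_of_injective _ hinj]
  refine hu.card_le_four_of_mem_span_pair hw fun v hv => ?_
  obtain ⟨L, hL, rfl⟩ := Finset.mem_image.mp hv
  refine ⟨hc L, mem_span_pair_of_ker_dotProductEquiv_inf_le ?_⟩
  rw [← hLc L]
  exact (Finset.mem_filter.mp hL).2

/-- Let `Γ` be a graph in `[l]` and let `p` be a prime with `p ∉ {2, 3}`. Then every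
`p`-cocycle `η : A(Γ) → 𝔽_p` is constant on `A(Γ)`; that is, `β_p(Γ) = 0`. -/
theorem betaP_vanishes_p_ne_two_three {l : ℕ} (G : SGraph l)
    (p : ℕ) (hp : p.Prime) (hp2 : p ≠ 2) (hp3 : p ≠ 3)
    (η : {H // H ∈ graphArr G} → ZMod p) (hη : IsCocycle p (graphArr G) η) :
    ∀ H K : {H // H ∈ graphArr G}, η H = η K := by
  intro H K
  rcases eq_or_ne H K with rfl | hHK
  · rfl
  have hX : IsRank2Flat (graphArr G) (H ⊓ K) :=
    ⟨H, H.2, K, K.2, Subtype.coe_injective.ne hHK, rfl⟩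
  have hHX : H ∈ flatHyps (graphArr G) (H ⊓ K) :=
    Finset.mem_filter.mpr ⟨Finset.mem_attach _ _, inf_le_left⟩
  have hKX : K ∈ flatHyps (graphArr G) (H ⊓ K) :=
    Finset.mem_filter.mpr ⟨Finset.mem_attach _ _, inf_le_right⟩
  have hndvd : ¬ p ∣ (flatHyps (graphArr G) (H ⊓ K)).card :=
    Nat.not_dvd_of_pos_of_lt (Finset.card_pos.mpr ⟨H, hHX⟩)
      ((card_flatHyps_inf_le_four G H.2 K.2).trans_lt (hp.five_le_of_ne_two_of_ne_three hp2 hp3))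
  exact (hη _ hX).2 hndvd H hHX K hKX
end
end

section
/- Let A be a finite central arrangement of linear hyperplanes in ℂ^l and let p be a prime such that p does not divide m_X for any dense rank-2 flat X of A (that is, for any rank-2 flat X with m_X ≥ 3). Then every p-cocycle η : A → 𝔽_p is constant on A; that is, β_{1p}(A) = 0. -/
open scoped Classical

noncomputable section

/-- Let `A` be a finite central arrangement in `ℂ^l` and `p` a prime not dividing `m_X`
for any dense rank-2 flat `X` (i.e. any rank-2 flat with `m_X ≥ 3`). Then every
`p`-cocycle `η : A → 𝔽_p` is constant on `A`; that is, `β_{1p}(A) = 0`. -/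
theorem betaP_vanishes_of_not_dvd_dense {l : ℕ} (A : Finset (Hyp l))
    (p : ℕ) (hp : p.Prime)
    (hdense : ∀ X : Hyp l, IsRank2Flat A X → 3 ≤ (flatHyps A X).card →
      ¬ p ∣ (flatHyps A X).card)
    (η : {H // H ∈ A} → ZMod p) (hη : IsCocycle p A η) :
    ∀ H K : {H // H ∈ A}, η H = η K := by
  intro H K
  by_cases hHK : H = K
  · rw [hHK]
  have hv : (H : Hyp l) ≠ (K : Hyp l) := fun h => hHK (Subtype.ext h)
  set X : Hyp l := (H : Hyp l) ⊓ (K : Hyp l) with hX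
  have hflat : IsRank2Flat A X := ⟨H, H.2, K, K.2, hv, rfl⟩
  have hHmem : H ∈ flatHyps A X := by
    simp only [flatHyps, Finset.mem_filter, Finset.mem_attach, true_and]
    exact inf_le_left
  have hKmem : K ∈ flatHyps A X := by
    simp only [flatHyps, Finset.mem_filter, Finset.mem_attach, true_and]
    exact inf_le_right
  have hsub : ({H, K} : Finset {H // H ∈ A}) ⊆ flatHyps A X := by
    intro L hL
    rcases Finset.mem_insert.mp hL with h | h
    · rw [h]; exact hHmem
    · rw [Finset.mem_singleton.mp h]; exact hKmem
  have hcard2 : 2 ≤ (flatHyps A X).card := by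
    have := Finset.card_le_card hsub
    rwa [Finset.card_pair hHK] at this
  rcases lt_or_ge (flatHyps A X).card 3 with h3 | h3
  · -- m_X = 2
    have hc : (flatHyps A X).card = 2 := le_antisymm (by omega) hcard2
    have heq : flatHyps A X = {H, K} := by
      apply (Finset.eq_of_subset_of_card_le hsub _).symm
      rw [hc, Finset.card_pair hHK]
    by_cases hdvd : p ∣ (flatHyps A X).card
    · have hsum := (hη X hflat).1 hdvd
      rw [heq, Finset.sum_pair hHK] at hsum
      have hp2 : p = 2 := by
        rw [hc] at hdvd
        exact ((Nat.prime_dvd_prime_iff_eq hp Nat.prime_two).mp hdvd)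
      subst hp2
      have : η H = -η K := by linear_combination hsum
      rw [this, CharTwo.neg_eq]
    · exact (hη X hflat).2 hdvd H hHmem K hKmem
  · exact (hη X hflat).2 (hdense X hflat h3) H hHmem K hKmem
end
end
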